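/- Let D be an oriented knot diagram with n ≥ 1 crossings, modeled by a Gauss code g, and let e : ZMod (2*n) be any position. If the passage at position e is an under-passage (i.e., (g e).2 = false) then d (e+1) = d e − 1, and if it is an over-passage (i.e., (g e).2 = true) then d (e+1) = d e + 1. In particular the warping degrees of consecutive edges differ by exactly 1. -/

import Mathlib

open Polynomial Finset

/-- An oriented knot diagram with `n` crossings, modeled by its oriented Gauss code. -/
structure GaussCode (n : ℕ) where
  g : ZMod (2 * n) → Fin n × Bool
  o : Fin n → ZMod (2 * n)
  u : Fin n → ZMod (2 * n)
  over_iff : ∀ (c : Fin n) (e : ZMod (2 * n)), g e = (c, true) ↔ e = o c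
  under_iff : ∀ (c : Fin n) (e : ZMod (2 * n)), g e = (c, false) ↔ e = u c

namespace GaussCode

variable {n : ℕ}

/-- The warping degree of the base position `e`: the number of crossings whose
under-passage occurs strictly before its over-passage when traversing the diagram
starting at `e`. -/
def d (D : GaussCode n) (e : ZMod (2 * n)) : ℕ :=
  (Finset.univ.filter fun c : Fin n => (D.u c - e).val < (D.o c - e).val).card

/-- The warping crossing polynomial. -/
noncomputable def Xpoly (D : GaussCode n) : Polynomial ℤ :=
  ∑ c : Fin n, Polynomial.X ^ D.d (D.o c)

/-- The warping polynomial. -/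
noncomputable def Wpoly (D : GaussCode n) : Polynomial ℤ :=
  ∑ k ∈ Finset.range (2 * n), Polynomial.X ^ D.d (k : ZMod (2 * n))

/-- The warping degree of the diagram: minimum over all base positions. -/
noncomputable def wdeg (D : GaussCode n) : ℕ :=
  sInf (Set.range fun e : ZMod (2 * n) => D.d e)

/-- The diagram is alternating. -/
def Alternating (D : GaussCode n) : Prop :=
  ∀ e : ZMod (2 * n), (D.g e).2 ≠ (D.g (e + 1)).2

end GaussCode

/-! Reading the cyclic word of passages from `e + 1` instead of `e` moves the passage at `e`
from the front to the back and keeps the relative order of all other passages. So only the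
crossing `c` passed at `e` can change its status: if `e` is its under-passage, `c` is counted
from `e` but not from `e + 1`; if `e` is its over-passage, the other way round. -/

namespace Finset

theorem card_filter_eq_card_filter_add_one {α : Type*} [DecidableEq α] {s : Finset α}
    {p q : α → Prop} [DecidablePred p] [DecidablePred q] {a : α} (ha : a ∈ s) (hp : p a)
    (hq : ¬ q a) (hpq : ∀ x ∈ s, x ≠ a → (p x ↔ q x)) :
    #(s.filter p) = #(s.filter q) + 1 := by
  have herase : (s.erase a).filter p = (s.erase a).filter q :=
    filter_congr fun x hx => hpq x (mem_of_mem_erase hx) (ne_of_mem_erase hx)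
  calc #(s.filter p) = #((s.filter p).erase a) + 1 :=
        (card_erase_add_one (mem_filter.2 ⟨ha, hp⟩)).symm
    _ = #(s.filter q) + 1 := by
        rw [← filter_erase, herase, filter_erase, erase_eq_of_notMem (by simp [hq])]

end Finset

namespace ZMod

variable {N : ℕ} [NeZero N]

theorem val_sub_one_of_ne_zero {a : ZMod N} (ha : a ≠ 0) : (a - 1).val = a.val - 1 := by
  have hpos := val_pos.2 ha
  have hone : (1 : ZMod N).val = 1 := by
    rcases Nat.lt_or_ge 1 N with hN | hN
    · rw [val_one_eq_one_mod, Nat.mod_eq_of_lt hN]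
    · have := val_lt a
      omega
  rw [val_sub (by omega), hone]

theorem val_neg_one_eq : (-1 : ZMod N).val = N - 1 := by
  obtain ⟨m, rfl⟩ := Nat.exists_eq_succ_of_ne_zero (NeZero.ne N)
  simp

theorem val_sub_add_one_lt_iff_of_ne {x y e : ZMod N} (hx : x ≠ e) (hy : y ≠ e) :
    (x - (e + 1)).val < (y - (e + 1)).val ↔ (x - e).val < (y - e).val := by
  have hx' := val_pos.2 (sub_ne_zero.2 hx)
  have hy' := val_pos.2 (sub_ne_zero.2 hy)
  rw [← sub_sub, ← sub_sub, val_sub_one_of_ne_zero (sub_ne_zero.2 hx),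
    val_sub_one_of_ne_zero (sub_ne_zero.2 hy)]
  omega

theorem not_val_sub_self_add_one_lt (e x : ZMod N) : ¬ (e - (e + 1)).val < (x - (e + 1)).val := by
  have := val_lt (x - (e + 1))
  rw [sub_add_cancel_left, val_neg_one_eq]
  omega

theorem val_sub_add_one_lt_val_sub_self_add_one_iff (e x : ZMod N) :
    (x - (e + 1)).val < (e - (e + 1)).val ↔ x ≠ e := by
  rw [sub_add_cancel_left, val_neg_one_eq, ← sub_sub]
  by_cases hx : x = e
  · simp [hx, val_neg_one_eq]
  · have hlt := val_lt (x - e)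
    have hpos := val_pos.2 (sub_ne_zero.2 hx)
    rw [val_sub_one_of_ne_zero (sub_ne_zero.2 hx)]
    exact iff_of_true (by omega) hx

end ZMod

namespace GaussCode

variable {n : ℕ} (D : GaussCode n)

theorem g_u (c : Fin n) : D.g (D.u c) = (c, false) := (D.under_iff c _).2 rfl

theorem g_o (c : Fin n) : D.g (D.o c) = (c, true) := (D.over_iff c _).2 rfl

theorem o_ne_u (c : Fin n) : D.o c ≠ D.u c := fun h => by simpa [h, g_u] using D.g_o c

theorem u_ne_of_fst_ne {c : Fin n} {e : ZMod (2 * n)} (h : (D.g e).1 ≠ c) : D.u c ≠ e := by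
  rintro rfl
  simp [g_u] at h

theorem o_ne_of_fst_ne {c : Fin n} {e : ZMod (2 * n)} (h : (D.g e).1 ≠ c) : D.o c ≠ e := by
  rintro rfl
  simp [g_o] at h

end GaussCode

theorem warping_degree_succ_general
    (n : ℕ) (D : GaussCode n) (e : ZMod (2 * n)) :
    ((D.g e).2 = false → D.d (e + 1) + 1 = D.d e) ∧
    ((D.g e).2 = true → D.d (e + 1) = D.d e + 1) := by
  rcases hge : D.g e with ⟨c, b⟩
  have : NeZero (2 * n) := ⟨by have := c.pos; omega⟩
  have unchanged : ∀ c' ∈ univ, c' ≠ c → ((D.u c' - (e + 1)).val < (D.o c' - (e + 1)).val ↔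
      (D.u c' - e).val < (D.o c' - e).val) := fun c' _ hc' =>
    ZMod.val_sub_add_one_lt_iff_of_ne (D.u_ne_of_fst_ne (by rw [hge]; exact hc'.symm))
      (D.o_ne_of_fst_ne (by rw [hge]; exact hc'.symm))
  refine ⟨fun hb => ?_, fun hb => ?_⟩
  · subst hb
    have heu : D.u c = e := ((D.under_iff c e).1 hge).symm
    have hoe : D.o c ≠ e := heu ▸ D.o_ne_u c
    refine (card_filter_eq_card_filter_add_one (mem_univ c) ?_ ?_
      fun c' hc' hne => (unchanged c' hc' hne).symm).symm
    · rw [heu, sub_self, ZMod.val_zero]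
      exact ZMod.val_pos.2 (sub_ne_zero.2 hoe)
    · rw [heu]
      exact ZMod.not_val_sub_self_add_one_lt e _
  · subst hb
    have heo : D.o c = e := ((D.over_iff c e).1 hge).symm
    have hue : D.u c ≠ e := heo ▸ (D.o_ne_u c).symm
    refine card_filter_eq_card_filter_add_one (mem_univ c) ?_ ?_ unchanged
    · rw [heo]
      exact (ZMod.val_sub_add_one_lt_val_sub_self_add_one_iff e _).2 hue
    · rw [heo, sub_self, ZMod.val_zero]
      exact Nat.not_lt_zero _

/-- The warping degrees of consecutive edges differ by exactly one: it drops by one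
after an under-passage and rises by one after an over-passage. -/
theorem warping_degree_succ
    (n : ℕ) (hn : 1 ≤ n) (D : GaussCode n) (e : ZMod (2 * n)) :
    ((D.g e).2 = false → D.d (e + 1) + 1 = D.d e) ∧
    ((D.g e).2 = true → D.d (e + 1) = D.d e + 1) :=
  warping_degree_succ_general n D e
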